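/- For every elementary inference system I and every atom A (possibly containing variables), A is provable in I if and only if its grounded version A↓ (obtained by replacing each variable x by a fresh constant c_x) is provable in I, where proof trees for A↓ are built over the extended signature F ∪ {c_x : x ∈ X}. -/

import Mathlib

inductive Tm (F V : Type) : Type where
  | var : V → Tm F V
  | app : F → List (Tm F V) → Tm F V

namespace Tm

def subE {F F' V W : Type} (emb : F → F') (σ : V → Tm F' W) : Tm F V → Tm F' W
  | .var x => σ x
  | .app f ts => .app (emb f) (ts.attach.map (fun t => subE emb σ t.1))
decreasing_by simp_wf; have := List.sizeOf_lt_of_mem t.2; omega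

def eval {F V D : Type} (fn : F → List D → D) (v : V → D) : Tm F V → D
  | .var x => v x
  | .app f ts => fn f (ts.attach.map (fun t => eval fn v t.1))
decreasing_by simp_wf; have := List.sizeOf_lt_of_mem t.2; omega

def vars {F V : Type} : Tm F V → Set V
  | .var x => {x}
  | .app _ ts => (ts.attach.map (fun t => vars t.1)).foldr (· ∪ ·) ∅
decreasing_by simp_wf; have := List.sizeOf_lt_of_mem t.2; omega

def gr {F V : Type} : Tm F V → Tm (F ⊕ V) Empty :=
  subE Sum.inl (fun x => .app (Sum.inr x) [])

def ungr {F V : Type} : Tm (F ⊕ V) Empty → Tm F V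
  | .var e => e.elim
  | .app (Sum.inl f) ts => .app f (ts.attach.map (fun t => ungr t.1))
  | .app (Sum.inr x) _ => .var x
decreasing_by simp_wf; have := List.sizeOf_lt_of_mem t.2; omega

inductive WFg {F V : Type} : Tm (F ⊕ V) Empty → Prop where
  | inl {f : F} {ts : List (Tm (F ⊕ V) Empty)} (h : ∀ t ∈ ts, WFg t) :
      WFg (.app (Sum.inl f) ts)
  | inr {x : V} : WFg (.app (Sum.inr x) [])

end Tm

structure Atm (F P V : Type) : Type where
  pred : P
  args : List (Tm F V)

def Atm.subE {F F' P V W : Type} (emb : F → F') (σ : V → Tm F' W) (A : Atm F P V) :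
    Atm F' P W :=
  ⟨A.pred, A.args.map (Tm.subE emb σ)⟩

def Atm.gr {F P V : Type} : Atm F P V → Atm (F ⊕ V) P Empty :=
  Atm.subE Sum.inl (fun x => .app (Sum.inr x) [])

def Atm.vars {F P V : Type} (A : Atm F P V) : Set V :=
  A.args.foldr (fun t s => t.vars ∪ s) ∅

def Atm.Sat {F P V D : Type} (fn : F → List D → D) (pr : P → List D → Prop)
    (v : V → D) (A : Atm F P V) : Prop :=
  pr A.pred (A.args.map (Tm.eval fn v))

structure Rule (F P V : Type) : Type where
  prems : List (Atm F P V)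
  concl : Atm F P V

inductive Prov {F F' P V W : Type} (I : Set (Rule F P V)) (emb : F → F') :
    Atm F' P W → Prop where
  | step (ρ : Rule F P V) (hρ : ρ ∈ I) (σ : V → Tm F' W)
      (ih : ∀ B ∈ ρ.prems, Prov I emb (B.subE emb σ)) :
      Prov I emb (ρ.concl.subE emb σ)

def ModelsEIS {F P V D : Type} (fn : F → List D → D) (pr : P → List D → Prop)
    (I : Set (Rule F P V)) : Prop :=
  ∀ ρ ∈ I, ∀ v : V → D,
    (∀ B ∈ ρ.prems, B.Sat fn pr v) → ρ.concl.Sat fn pr v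

def QSat {V D : Type} [DecidableEq V] :
    List (Bool × V) → ((V → D) → Prop) → (V → D) → Prop
  | [], base, v => base v
  | (true, x) :: qs, base, v => ∀ d : D, QSat qs base (Function.update v x d)
  | (false, x) :: qs, base, v => ∃ d : D, QSat qs base (Function.update v x d)

def GT (F V : Type) : Type := {s : Tm (F ⊕ V) Empty // s.WFg}

def GT.app {F V : Type} (f : F) (ss : List (GT F V)) : GT F V :=
  ⟨.app (Sum.inl f) (ss.map Subtype.val), Tm.WFg.inl (by
    intro t ht
    rcases List.mem_map.mp ht with ⟨u, _, rfl⟩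
    exact u.2)⟩

def GT.cvar {F V : Type} (x : V) : GT F V := ⟨.app (Sum.inr x) [], Tm.WFg.inr⟩

/-- Interpretation of the extended signature `F ⊕ V` on well-formed ground terms. -/
def fnE (F V : Type) : (F ⊕ V) → List (GT F V) → GT F V
  | .inl f, ss => GT.app f ss
  | .inr x, _ => GT.cvar x

/-- Predicate interpretation of the grounded canonical model `M↓`:
a ground atom holds iff its ungrounding is provable in `I`. -/
def prE {F P V : Type} (I : Set (Rule F P V)) : P → List (GT F V) → Prop :=
  fun Pd ss => Prov I (id : F → F) (⟨Pd, ss.map (fun s => s.1.ungr)⟩ : Atm F P V)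

/-!
Grounding commutes with instantiation: `(Aσ)↓ = A(σ↓)`, and ungrounding (reading each `c_x`
back as `x`) commutes with instantiation over the extended signature. Hence any operation on
terms with this property maps proof trees to proof trees rule by rule: grounding sends proofs
of `A` to proofs of `A↓`, and ungrounding sends proofs of `A↓` back to proofs of `A`.
-/

namespace Tm

@[elab_as_elim]
lemma induction_mem {F V : Type} {motive : Tm F V → Prop}
    (var : ∀ x, motive (.var x))
    (app : ∀ f ts, (∀ t ∈ ts, motive t) → motive (.app f ts)) (t : Tm F V) : motive t := by
  induction t using Tm.subE.induct with
  | case1 x => exact var x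
  | case2 f ts ih => exact app f ts fun t ht => ih ⟨t, ht⟩

section subE

variable {F F' F'' V W U : Type}

@[simp]
lemma subE_var (emb : F → F') (σ : V → Tm F' W) (x : V) : subE emb σ (.var x) = σ x := by
  rw [subE]

@[simp]
lemma subE_app (emb : F → F') (σ : V → Tm F' W) (f : F) (ts : List (Tm F V)) :
    subE emb σ (.app f ts) = .app (emb f) (ts.map (subE emb σ)) := by
  rw [subE, List.attach_map_val]

lemma subE_subE (emb : F → F') (emb' : F' → F'') (σ : V → Tm F' W) (τ : W → Tm F'' U)
    (t : Tm F V) : subE emb' τ (subE emb σ t) = subE (emb' ∘ emb) (subE emb' τ ∘ σ) t := by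
  induction t using induction_mem with
  | var x => simp
  | app f ts ih => simpa using List.map_congr_left ih

lemma subE_id_var (t : Tm F V) : subE id Tm.var t = t := by
  induction t using induction_mem with
  | var x => simp
  | app f ts ih => simpa using List.map_congr_left ih

end subE

lemma ungr_app_inl {F V : Type} (f : F) (ts : List (Tm (F ⊕ V) Empty)) :
    ungr (.app (Sum.inl f) ts) = .app f (ts.map ungr) := by
  rw [ungr, List.attach_map_val]

lemma ungr_subE_inl {F V W : Type} (σ : W → Tm (F ⊕ V) Empty) (t : Tm F W) :
    ungr (subE Sum.inl σ t) = subE id (ungr ∘ σ) t := by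
  induction t using induction_mem with
  | var x => simp
  | app f ts ih => simpa [ungr_app_inl] using List.map_congr_left ih

lemma gr_subE {F V W : Type} (σ : V → Tm F W) (t : Tm F V) :
    gr (subE id σ t) = subE Sum.inl (gr ∘ σ) t :=
  subE_subE id Sum.inl σ _ t

lemma ungr_gr {F V : Type} (t : Tm F V) : ungr (gr t) = t := by
  rw [gr, ungr_subE_inl]
  convert subE_id_var t
  funext x
  rw [Function.comp_apply, ungr]

end Tm

def Atm.map {F F' P V W : Type} (φ : Tm F V → Tm F' W) (A : Atm F P V) : Atm F' P W :=
  ⟨A.pred, A.args.map φ⟩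

lemma Atm.map_subE {F F' F'' P V W W' : Type} {emb : F → F'} {emb' : F → F''}
    {φ : Tm F' W → Tm F'' W'}
    (hφ : ∀ (σ : V → Tm F' W) (t : Tm F V), φ (t.subE emb σ) = t.subE emb' (φ ∘ σ))
    (σ : V → Tm F' W) (B : Atm F P V) : (B.subE emb σ).map φ = B.subE emb' (φ ∘ σ) := by
  simp only [Atm.map, Atm.subE, List.map_map]
  congr 1
  exact List.map_congr_left fun t _ => hφ σ t

theorem Prov.map {F F' F'' P V W W' : Type} {I : Set (Rule F P V)} {emb : F → F'}
    {emb' : F → F''} {φ : Tm F' W → Tm F'' W'}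
    (hφ : ∀ (σ : V → Tm F' W) (t : Tm F V), φ (t.subE emb σ) = t.subE emb' (φ ∘ σ))
    {A : Atm F' P W} (h : Prov I emb A) : Prov I emb' (A.map φ) := by
  induction h with
  | step ρ hρ σ _ ih =>
    rw [Atm.map_subE hφ]
    exact .step ρ hρ _ fun B hB => Atm.map_subE hφ σ B ▸ ih B hB

lemma Atm.gr_map_ungr {F P V : Type} (A : Atm F P V) : A.gr.map Tm.ungr = A := by
  obtain ⟨p, args⟩ := A
  simp only [Atm.gr, Atm.map, Atm.subE, List.map_map, Atm.mk.injEq, true_and]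
  exact (List.map_congr_left fun t _ => Tm.ungr_gr t).trans args.map_id

/-- an atom is provable in `I` iff its grounded version is provable in `I`
over the extended signature `F ∪ {c_x : x ∈ X}`. -/
theorem stmt4 {F P V : Type} (I : Set (Rule F P V)) (A : Atm F P V) :
    Prov I (id : F → F) A ↔ Prov I (Sum.inl : F → F ⊕ V) A.gr := by
  constructor
  · exact Prov.map (φ := Tm.gr) Tm.gr_subE
  · intro h
    simpa only [Atm.gr_map_ungr] using Prov.map (φ := Tm.ungr) Tm.ungr_subE_inl h
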